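/- Let (X,d) be a complete metric space, k ∈ ℕ, and T : X^ℕ → X (a map on infinite sequences in X) satisfy: for all u₁,…,u_k, v₁,…,v_k ∈ X, d(T(û), T(v̂)) ≤ (β(d(u_k, v_k))/2)·( d(T(û), u_k) + d(T(v̂), v_k) ), where û denotes the sequence (u₁,…,u_{k-1}, u_k, u_k, u_k, …) (the k-th entry repeated from position k onward), similarly v̂, and β is a Geraghty function. Then there exists u ∈ X such that T applied to the constant sequence (u,u,…) equals u, and for any base points x₁,…,x_k ∈ X, the infinite k-Picard sequence defined by x_{n+k} := T(x_n, x_{n+1},…,x_{n+k-1}, x_{n+k-1}, x_{n+k-1},…) converges to u. -/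

import Mathlib

/-!
Write `p a` for the last entry of a window `a = (u₁, …, u_k)` and `F a := T(â)`. Along a `k`-Picard
sequence the windows `aₙ = (xₙ, …, x_{n+k-1})` satisfy `p aₙ₊₁ = F aₙ`, so the Kannan inequality
for `aₙ, aₙ₊₁` gives `Dₙ₊₁ ≤ β(Dₙ) Dₙ` for the step lengths `Dₙ = d(x_{n+k}, x_{n+k-1})`.
Hence `Dₙ` decreases to a limit, and if the limit were positive then `β(Dₙ) → 1`, contradicting the
Geraghty property. Since `β < 1`, the Kannan inequality bounds `d(x_{n+k}, x_{m+k})` by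
`(Dₙ + D_m) / 2`, so the sequence is Cauchy; comparing it with the constant window at its limit `v`
shows `T(v, v, …) = v`, and the same inequality for two constant windows makes the fixed point unique.
-/

open Filter Topology

def IsGeraghty (β : ℝ → ℝ) : Prop :=
  (∀ t : ℝ, 0 ≤ t → 0 ≤ β t ∧ β t < 1) ∧
  (∀ t : ℕ → ℝ, (∀ n, 0 ≤ t n) →
    Filter.Tendsto (fun n => β (t n)) Filter.atTop (nhds 1) →
    Filter.Tendsto t Filter.atTop (nhds 0))

def hatSeq {X : Type*} (k : ℕ) (hk : 0 < k) (u : Fin k → X) : ℕ → X :=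
  fun i => u ⟨min i (k - 1), by omega⟩

theorem IsGeraghty.tendsto_zero_of_le_mul {β : ℝ → ℝ} (hβ : IsGeraghty β) {D : ℕ → ℝ}
    (hD : ∀ n, 0 ≤ D n) (h : ∀ n, D (n + 1) ≤ β (D n) * D n) : Tendsto D atTop (𝓝 0) := by
  have hβ_lt n : β (D n) < 1 := (hβ.1 _ (hD n)).2
  have hanti : Antitone D := antitone_nat_of_succ_le fun n =>
    (h n).trans (mul_le_of_le_one_left (hD n) (hβ_lt n).le)
  have hlim : Tendsto D atTop (𝓝 (⨅ n, D n)) :=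
    tendsto_atTop_ciInf hanti ⟨0, Set.forall_mem_range.2 hD⟩
  rcases (le_ciInf hD).eq_or_lt with hL | hL
  · rwa [← hL] at hlim
  have hpos n : 0 < D n := hL.trans_le (ciInf_le ⟨0, Set.forall_mem_range.2 hD⟩ n)
  -- If `L := ⨅ n, D n > 0`, then `D (n + 1) / D n → L / L = 1` squeezes `β (D n)` to `1`.
  have hratio : Tendsto (fun n => D (n + 1) / D n) atTop (𝓝 1) := by
    have := (hlim.comp (tendsto_add_atTop_nat 1)).div hlim hL.ne'
    rwa [div_self hL.ne'] at this
  have hβ_one : Tendsto (fun n => β (D n)) atTop (𝓝 1) :=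
    tendsto_of_tendsto_of_tendsto_of_le_of_le hratio tendsto_const_nhds
      (fun n => (div_le_iff₀ (hpos n)).2 (h n)) (fun n => (hβ_lt n).le)
  exact absurd (tendsto_nhds_unique hlim (hβ.2 D hD hβ_one)) hL.ne'

noncomputable def seqOfRecurrence {X : Type*} (k : ℕ) (G : (Fin k → X) → X) (x₀ : X) : ℕ → X
  | n => if n < k then x₀ else G fun i => seqOfRecurrence k G x₀ (n - k + i)
termination_by n => n
decreasing_by have := i.isLt; omega

theorem seqOfRecurrence_add {X : Type*} (k : ℕ) (G : (Fin k → X) → X) (x₀ : X) (n : ℕ) :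
    seqOfRecurrence k G x₀ (n + k) = G fun i => seqOfRecurrence k G x₀ (n + i) := by
  rw [seqOfRecurrence, if_neg (by omega), Nat.add_sub_cancel]

/-- For `p = id` this is the classical Kannan–Geraghty condition on `X`; for `p a = a (k - 1)` and
`F a = T (hatSeq k hk a)` it is the `H_k` condition. -/
def KannanGeraghtyWith {A X : Type*} [MetricSpace X] (β : ℝ → ℝ) (p F : A → X) : Prop :=
  ∀ a b, dist (F a) (F b) ≤ β (dist (p a) (p b)) / 2 * (dist (F a) (p a) + dist (F b) (p b))

namespace KannanGeraghtyWith

variable {A X : Type*} [MetricSpace X] {β : ℝ → ℝ} {p F : A → X}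

theorem dist_le_half (hF : KannanGeraghtyWith β p F) (hβ : IsGeraghty β) (a b : A) :
    dist (F a) (F b) ≤ (dist (F a) (p a) + dist (F b) (p b)) / 2 := by
  have hβab := hβ.1 _ (dist_nonneg (x := p a) (y := p b))
  have hsum : 0 ≤ dist (F a) (p a) + dist (F b) (p b) := by positivity
  nlinarith [hF a b]

theorem eq_of_apply_eq_proj (hF : KannanGeraghtyWith β p F) (hβ : IsGeraghty β) {a b : A}
    (ha : F a = p a) (hb : F b = p b) : p a = p b := by
  have := hF.dist_le_half hβ a b
  rw [ha, hb, dist_self, dist_self] at this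
  exact dist_le_zero.mp (by linarith)

variable {a : ℕ → A}

theorem dist_succ_le (hF : KannanGeraghtyWith β p F) (hβ : IsGeraghty β)
    (ha : ∀ n, p (a (n + 1)) = F (a n)) (n : ℕ) :
    dist (p (a (n + 2))) (p (a (n + 1))) ≤
      β (dist (p (a (n + 1))) (p (a n))) * dist (p (a (n + 1))) (p (a n)) := by
  set D₀ := dist (p (a (n + 1))) (p (a n))
  set D₁ := dist (p (a (n + 2))) (p (a (n + 1)))
  have hkey : D₁ ≤ β D₀ / 2 * (D₀ + D₁) := by
    have h := hF (a n) (a (n + 1))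
    rwa [← ha, ← ha, dist_comm (p (a n)), dist_comm (p (a (n + 1)))] at h
  -- Solving for `D₁` gives `D₁ ≤ β D₀ / (2 - β D₀) * D₀`, and `2 - β D₀ ≥ 1`.
  nlinarith [hβ.1 D₀ dist_nonneg, dist_nonneg (x := p (a (n + 2))) (y := p (a (n + 1)))]

theorem tendsto_dist_succ (hF : KannanGeraghtyWith β p F) (hβ : IsGeraghty β)
    (ha : ∀ n, p (a (n + 1)) = F (a n)) :
    Tendsto (fun n => dist (p (a (n + 1))) (p (a n))) atTop (𝓝 0) :=
  hβ.tendsto_zero_of_le_mul (fun _ => dist_nonneg) (hF.dist_succ_le hβ ha)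

theorem cauchySeq (hF : KannanGeraghtyWith β p F) (hβ : IsGeraghty β)
    (ha : ∀ n, p (a (n + 1)) = F (a n)) : CauchySeq fun n => p (a n) := by
  refine (cauchySeq_shift 1).1 (Metric.cauchySeq_iff'.2 fun ε hε => ?_)
  obtain ⟨N, hN⟩ := Metric.tendsto_atTop.1 (hF.tendsto_dist_succ hβ ha) ε hε
  have hsmall {n} (hn : N ≤ n) : dist (p (a (n + 1))) (p (a n)) < ε := by
    simpa using hN n hn
  refine ⟨N, fun n hn => ?_⟩
  calc dist (p (a (n + 1))) (p (a (N + 1)))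
      ≤ (dist (p (a (n + 1))) (p (a n)) + dist (p (a (N + 1))) (p (a N))) / 2 := by
        simpa only [ha] using hF.dist_le_half hβ (a n) (a N)
    _ < ε := by linarith [hsmall hn, hsmall le_rfl]

theorem apply_eq_of_tendsto (hF : KannanGeraghtyWith β p F) (hβ : IsGeraghty β)
    (ha : ∀ n, p (a (n + 1)) = F (a n)) {v : X} (hv : Tendsto (fun n => p (a n)) atTop (𝓝 v))
    {c : A} (hc : p c = v) : F c = v := by
  have hshift : Tendsto (fun n => p (a (n + 1))) atTop (𝓝 v) :=
    hv.comp (tendsto_add_atTop_nat 1)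
  have hbound : dist v (F c) ≤ (dist v v + dist (F c) v) / 2 :=
    le_of_tendsto_of_tendsto' (hshift.dist tendsto_const_nhds)
      (((hshift.dist hv).add tendsto_const_nhds).div_const 2) fun n => by
        simpa only [ha, hc] using hF.dist_le_half hβ (a n) c
  rw [dist_self, dist_comm] at hbound
  exact dist_le_zero.mp (by linarith)

theorem exists_fixed_tendsto_of_recurrence [CompleteSpace X] {k : ℕ} (hk : 0 < k)
    {T : (ℕ → X) → X} (hβ : IsGeraghty β)
    (hT : KannanGeraghtyWith β (fun a : Fin k → X => a ⟨k - 1, Nat.sub_one_lt_of_lt hk⟩)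
      (T ∘ hatSeq k hk))
    {x : ℕ → X} (hx : ∀ n, x (n + k) = T (hatSeq k hk (fun i : Fin k => x (n + i)))) :
    ∃ v, T (fun _ => v) = v ∧ Tendsto x atTop (𝓝 v) := by
  let window (n : ℕ) (i : Fin k) : X := x (n + i)
  have hwindow n :
      window (n + 1) ⟨k - 1, Nat.sub_one_lt_of_lt hk⟩ = T (hatSeq k hk (window n)) := by
    change x (n + 1 + (k - 1)) = _
    rw [← hx]; congr 1; omega
  obtain ⟨v, hv⟩ := cauchySeq_tendsto_of_complete (hT.cauchySeq hβ hwindow)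
  exact ⟨v, hT.apply_eq_of_tendsto hβ hwindow hv (c := fun _ => v) rfl,
    (tendsto_add_atTop_iff_nat _).1 hv⟩

end KannanGeraghtyWith

theorem extended_kannan_geraghty_Hk {X : Type*} [MetricSpace X] [CompleteSpace X] [Nonempty X]
    (k : ℕ) (hk : 0 < k) (β : ℝ → ℝ) (hβ : IsGeraghty β) (T : (ℕ → X) → X)
    (hT : ∀ a b : Fin k → X,
      dist (T (hatSeq k hk a)) (T (hatSeq k hk b)) ≤
        β (dist (a ⟨k - 1, by omega⟩) (b ⟨k - 1, by omega⟩)) / 2 *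
          (dist (T (hatSeq k hk a)) (a ⟨k - 1, by omega⟩) +
            dist (T (hatSeq k hk b)) (b ⟨k - 1, by omega⟩))) :
    ∃ u : X, T (fun _ => u) = u ∧
      ∀ x : ℕ → X, (∀ n, x (n + k) = T (hatSeq k hk (fun i : Fin k => x (n + i)))) →
        Tendsto x atTop (𝓝 u) := by
  have hKG : KannanGeraghtyWith β (fun a : Fin k → X => a ⟨k - 1, Nat.sub_one_lt_of_lt hk⟩)
      (T ∘ hatSeq k hk) := hT
  obtain ⟨u, hu, -⟩ := hKG.exists_fixed_tendsto_of_recurrence hk hβ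
    (seqOfRecurrence_add k (T ∘ hatSeq k hk) (Classical.arbitrary X))
  refine ⟨u, hu, fun x hx => ?_⟩
  obtain ⟨v, hv, hxv⟩ := hKG.exists_fixed_tendsto_of_recurrence hk hβ hx
  have huv : u = v := hKG.eq_of_apply_eq_proj hβ (a := fun _ => u) (b := fun _ => v) hu hv
  rwa [huv]
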